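/- (Convergence of Simulated SCSG to an ε-neighborhood.) Consider the Simulated SCSG algorithm: at epoch s, the reference x̃ = x̃_{s−1} is fixed, the reference gradient h̃(x̃) is the batch-averaged MLMC estimator with E[h̃(x̃)] = ∇F(x̃), and for t = 1,...,M the update is x_t = x_{t−1} − λν_t with ν_t = W(x_{t−1}, v_t) − W(x̃, v_t) + h̃(x̃); the epoch output x̃_s = x_t for t uniform on {0,...,M−1}. Fix ε > 0. Suppose λ and M satisfy α = 2/(μ(1 − (8/μ)C_D λ)λM) + ((8/μ)C_D + 8L)λ/(1 − (8/μ)C_D λ) < 1, and K, B are large enough that (4(λ + 1/(2μ))/(1 − (8/μ)C_D λ))·Var[h̃] < ε. Then E[F(x̃_s) − F(x⋆)] ≤ α^s E[F(x̃_0) − F(x⋆)] + ε/(1 − α). -/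

import Mathlib

/-!
Within an epoch, expand `‖x_{t+1} - x⋆‖² = ‖x_t - x⋆‖² - 2λ⟪ν_t, x_t - x⋆⟫ + λ²‖ν_t‖²` and take
expectations. Conditioning on `𝓕 s t` turns the simulated gradient difference into
`∇F(x_t) - ∇F(x̃)` in the cross term and bounds its second moment by `C_D ‖x_t - x̃‖²`. Strong
convexity, the bound `‖∇F‖² ≤ 2L (F - F⋆)` and Young's inequality for the reference-gradient error
`h̃ - ∇F(x̃)` then give
`E‖x_{t+1} - x⋆‖² ≤ E‖x_t - x⋆‖² - λ(1 - 8C_Dλ/μ) E[F(x_t) - F⋆] + λ²(8C_D/μ + 8L) E[F(x̃) - F⋆]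
  + (2λ/μ + 4λ²) Var[h̃]`.
Telescoping over the epoch, with `E‖x̃ - x⋆‖² ≤ (2/μ) E[F(x̃) - F⋆]`, and averaging over the
uniformly chosen output yields `E[F(x̃_{s+1}) - F⋆] ≤ α E[F(x̃_s) - F⋆] + ε`; unrolling this
recursion gives the bound.
-/

open MeasureTheory
open scoped RealInnerProductSpace

theorem norm_add_sq_le_two_mul {G : Type*} [SeminormedAddCommGroup G] (u v : G) :
    ‖u + v‖ ^ 2 ≤ 2 * ‖u‖ ^ 2 + 2 * ‖v‖ ^ 2 := by
  have := add_sq_le (a := ‖u‖) (b := ‖v‖)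
  have := pow_le_pow_left₀ (norm_nonneg _) (norm_add_le u v) 2
  linarith

theorem norm_sub_sq_le_two_mul {G : Type*} [SeminormedAddCommGroup G] (u v : G) :
    ‖u - v‖ ^ 2 ≤ 2 * ‖u‖ ^ 2 + 2 * ‖v‖ ^ 2 := by
  simpa [sub_eq_add_neg] using norm_add_sq_le_two_mul u (-v)

theorem mul_le_sq_div_add_mul_sq {a b c : ℝ} (hc : 0 < c) : a * b ≤ a ^ 2 / c + c / 4 * b ^ 2 := by
  have : a ^ 2 / c + c / 4 * b ^ 2 - a * b = (a - c / 2 * b) ^ 2 / c := by field_simp; ring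
  rw [← sub_nonneg, this]
  positivity

section InnerProductSpace

variable {E : Type*} [NormedAddCommGroup E] [InnerProductSpace ℝ E]

theorem norm_sub_smul_add_sq_le (a w h : E) (lam : ℝ) :
    ‖a - lam • (w + h)‖ ^ 2
      ≤ ‖a‖ ^ 2 + (-(2 * lam) * (⟪w, a⟫ + ⟪h, a⟫) + 2 * lam ^ 2 * (‖w‖ ^ 2 + ‖h‖ ^ 2)) := by
  rw [norm_sub_sq_real, real_inner_smul_right, real_inner_comm, inner_add_left, norm_smul, mul_pow,
    Real.norm_eq_abs, sq_abs]
  nlinarith [norm_add_sq_le_two_mul w h, sq_nonneg lam]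

theorem IsLocalMin.hasGradientAt_eq_zero [CompleteSpace E] {F : E → ℝ} {g x : E}
    (hmin : IsLocalMin F x) (hg : HasGradientAt F g x) : g = 0 :=
  (InnerProductSpace.toDual ℝ E).map_eq_zero_iff.1 (hmin.hasFDerivAt_eq_zero hg.hasFDerivAt)

theorem measurable_of_forall_hasGradientAt [CompleteSpace E] [MeasurableSpace E] [BorelSpace E]
    {F : E → ℝ} {gradF : E → E} (h : ∀ x, HasGradientAt F (gradF x) x) : Measurable gradF := by
  rw [← gradient_eq h]
  exact (InnerProductSpace.toDual ℝ E).symm.continuous.measurable.comp (measurable_fderiv ℝ F)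

def IsStronglyConvexGradOn (D : Set E) (μ : ℝ) (F : E → ℝ) (gradF : E → E) : Prop :=
  ∀ x ∈ D, ∀ y ∈ D, F x + ⟪gradF x, y - x⟫ + μ / 2 * ‖y - x‖ ^ 2 ≤ F y

namespace IsStronglyConvexGradOn

variable {D : Set E} {μ L lam CD : ℝ} {F : E → ℝ} {gradF : E → E} {x xr y xstar : E}

theorem sub_add_le_inner (hsc : IsStronglyConvexGradOn D μ F gradF) (hx : x ∈ D)
    (hstar : xstar ∈ D) :
    F x - F xstar + μ / 2 * ‖x - xstar‖ ^ 2 ≤ ⟪gradF x, x - xstar⟫ := by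
  have h := hsc x hx xstar hstar
  rw [← neg_sub x xstar, inner_neg_right, norm_neg] at h
  linarith

theorem quadratic_growth (hsc : IsStronglyConvexGradOn D μ F gradF) (hstar : xstar ∈ D)
    (hg0 : gradF xstar = 0) (hy : y ∈ D) : μ / 2 * ‖y - xstar‖ ^ 2 ≤ F y - F xstar := by
  have h := hsc xstar hstar y hy
  rw [hg0, inner_zero_left] at h
  linarith

theorem sq_norm_sub_le (hsc : IsStronglyConvexGradOn D μ F gradF) (hμ : 0 < μ)
    (hstar : xstar ∈ D) (hg0 : gradF xstar = 0) (hy : y ∈ D) :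
    ‖y - xstar‖ ^ 2 ≤ 2 / μ * (F y - F xstar) := by
  rw [div_mul_eq_mul_div, le_div_iff₀ hμ]
  linarith [hsc.quadratic_growth hstar hg0 hy]

theorem step_bound (hsc : IsStronglyConvexGradOn D μ F gradF) (hstar : xstar ∈ D)
    (hg0 : gradF xstar = 0) (hsm : ∀ x ∈ D, ‖gradF x‖ ^ 2 ≤ 2 * L * (F x - F xstar))
    (hμ : 0 < μ) (hlam : 0 ≤ lam) (hCD : 0 ≤ CD) (hx : x ∈ D) (hxr : xr ∈ D) (h : E) :
    -(2 * lam) * ⟪gradF x - gradF xr + h, x - xstar⟫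
        + 2 * lam ^ 2 * (CD * ‖x - xr‖ ^ 2 + ‖h‖ ^ 2)
      ≤ -(lam * (1 - 8 / μ * CD * lam)) * (F x - F xstar)
        + lam ^ 2 * (8 / μ * CD + 8 * L) * (F xr - F xstar)
        + (2 * lam / μ + 4 * lam ^ 2) * ‖h - gradF xr‖ ^ 2 := by
  have hgap : 0 ≤ F x - F xstar := by
    nlinarith [hsc.quadratic_growth hstar hg0 hx, sq_nonneg ‖x - xstar‖]
  have hdescent :
      -⟪gradF x - gradF xr + h, x - xstar⟫ ≤ -(F x - F xstar) + ‖h - gradF xr‖ ^ 2 / μ := by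
    have hyoung : -⟪h - gradF xr, x - xstar⟫
        ≤ ‖h - gradF xr‖ ^ 2 / μ + μ / 4 * ‖x - xstar‖ ^ 2 :=
      (neg_le_abs _).trans ((abs_real_inner_le_norm _ _).trans (mul_le_sq_div_add_mul_sq hμ))
    have hsplit : gradF x - gradF xr + h = gradF x + (h - gradF xr) := by abel
    rw [hsplit, inner_add_left]
    nlinarith [hsc.sub_add_le_inner hx hstar, sq_nonneg ‖x - xstar‖]
  have hdist : ‖x - xr‖ ^ 2 ≤ 4 / μ * ((F x - F xstar) + (F xr - F xstar)) := by
    have := hsc.sq_norm_sub_le hμ hstar hg0 hx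
    have := hsc.sq_norm_sub_le hμ hstar hg0 hxr
    calc ‖x - xr‖ ^ 2 = ‖(x - xstar) - (xr - xstar)‖ ^ 2 := by rw [sub_sub_sub_cancel_right]
      _ ≤ 2 * ‖x - xstar‖ ^ 2 + 2 * ‖xr - xstar‖ ^ 2 := norm_sub_sq_le_two_mul _ _
      _ ≤ 2 * (2 / μ * (F x - F xstar)) + 2 * (2 / μ * (F xr - F xstar)) := by linarith
      _ = 4 / μ * ((F x - F xstar) + (F xr - F xstar)) := by ring
  have hh : ‖h‖ ^ 2 ≤ 4 * L * (F xr - F xstar) + 2 * ‖h - gradF xr‖ ^ 2 := by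
    have := norm_add_sq_le_two_mul (gradF xr) (h - gradF xr)
    rw [add_sub_cancel] at this
    linarith [hsm xr hxr]
  have hdescent' := mul_le_mul_of_nonneg_left hdescent (by positivity : 0 ≤ 2 * lam)
  have hdist' := mul_le_mul_of_nonneg_left hdist (by positivity : 0 ≤ 2 * lam ^ 2 * CD)
  have hh' := mul_le_mul_of_nonneg_left hh (by positivity : 0 ≤ 2 * lam ^ 2)
  have hgap' := mul_nonneg hlam hgap
  have : 2 * lam * (‖h - gradF xr‖ ^ 2 / μ) = 2 * lam / μ * ‖h - gradF xr‖ ^ 2 := by ring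
  have : 2 * lam ^ 2 * CD * (4 / μ * ((F x - F xstar) + (F xr - F xstar)))
      = 8 / μ * CD * lam ^ 2 * (F x - F xstar) + 8 / μ * CD * lam ^ 2 * (F xr - F xstar) := by
    ring
  linarith

end IsStronglyConvexGradOn

end InnerProductSpace

section Integral

variable {Ω E : Type*} {m mΩ : MeasurableSpace Ω} {P : Measure Ω} [NormedAddCommGroup E]

theorem memLp_two_of_sq_norm_le {f : Ω → E} {g : Ω → ℝ} (hf : AEStronglyMeasurable f P)
    (hg : Integrable g P) (hfg : ∀ ω, ‖f ω‖ ^ 2 ≤ g ω) : MemLp f 2 P :=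
  (memLp_two_iff_integrable_sq_norm hf).2 <| hg.mono' (hf.norm.pow 2) <|
    ae_of_all _ fun ω => by rw [Real.norm_eq_abs, abs_of_nonneg (by positivity)]; exact hfg ω

theorem integral_le_of_condExp_le (hm : m ≤ mΩ) [SigmaFinite (P.trim hm)] {f g : Ω → ℝ}
    (hg : Integrable g P) (hfg : P[f|m] ≤ᵐ[P] g) : ∫ ω, f ω ∂P ≤ ∫ ω, g ω ∂P := by
  rw [← integral_condExp hm]
  exact integral_mono_ae integrable_condExp hg hfg

theorem integral_sub_const [IsProbabilityMeasure P] {f : Ω → ℝ} (hf : Integrable f P) (c : ℝ) :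
    ∫ ω, (f ω - c) ∂P = ∫ ω, f ω ∂P - c := by
  simp [integral_sub hf (integrable_const c)]

theorem memLp_two_comp_gradient [IsFiniteMeasure P] [MeasurableSpace E] [BorelSpace E]
    [SecondCountableTopology E] {D : Set E} {L : ℝ} {F : E → ℝ} {gradF : E → E} {xstar : E}
    (hsm : ∀ x ∈ D, ‖gradF x‖ ^ 2 ≤ 2 * L * (F x - F xstar))
    (hgm : Measurable gradF) {Z : Ω → E} (hZ : StronglyMeasurable Z) (hZD : ∀ ω, Z ω ∈ D)
    (hFZ : Integrable (fun ω => F (Z ω)) P) : MemLp (fun ω => gradF (Z ω)) 2 P :=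
  memLp_two_of_sq_norm_le (hgm.comp hZ.measurable).aestronglyMeasurable
    ((hFZ.sub (integrable_const _)).const_mul (2 * L)) fun ω => hsm _ (hZD ω)

variable [InnerProductSpace ℝ E] {D : Set E} {μ L lam CD V : ℝ} {F : E → ℝ} {gradF : E → E}
  {xstar : E}

theorem MeasureTheory.MemLp.integrable_inner {f g : Ω → E} (hf : MemLp f 2 P) (hg : MemLp g 2 P) :
    Integrable (fun ω => ⟪f ω, g ω⟫) P :=
  (L2.integrable_inner (hf.toLp f) (hg.toLp g)).congr
    (hf.coeFn_toLp.mp (hg.coeFn_toLp.mono fun ω hg hf => by simp only [hf, hg]))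

theorem integral_inner_eq_of_condExp_ae_eq [CompleteSpace E] (hm : m ≤ mΩ)
    [SigmaFinite (P.trim hm)] {f g Y : Ω → E} (hf : Integrable f P)
    (hY : StronglyMeasurable[m] Y) (hfY : Integrable (fun ω => ⟪f ω, Y ω⟫) P)
    (hfg : P[f|m] =ᵐ[P] g) : ∫ ω, ⟪f ω, Y ω⟫ ∂P = ∫ ω, ⟪g ω, Y ω⟫ ∂P := by
  rw [← integral_condExp hm]
  exact integral_congr_ae (((condExp_bilin_of_stronglyMeasurable_right (innerSL ℝ) hY hfY
    hf).trans (hfg.mono fun ω h => congrArg (⟪·, Y ω⟫) h)))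

theorem IsStronglyConvexGradOn.memLp_two_sub [IsFiniteMeasure P]
    (hsc : IsStronglyConvexGradOn D μ F gradF)
    (hμ : 0 < μ) (hstar : xstar ∈ D) (hg0 : gradF xstar = 0) {Z : Ω → E}
    (hZ : StronglyMeasurable Z) (hZD : ∀ ω, Z ω ∈ D) (hFZ : Integrable (fun ω => F (Z ω)) P) :
    MemLp (fun ω => Z ω - xstar) 2 P :=
  memLp_two_of_sq_norm_le (hZ.sub stronglyMeasurable_const).aestronglyMeasurable
    ((hFZ.sub (integrable_const _)).const_mul (2 / μ))
    fun ω => hsc.sq_norm_sub_le hμ hstar hg0 (hZD ω)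

theorem IsStronglyConvexGradOn.integral_sq_norm_sub_le [IsProbabilityMeasure P]
    (hsc : IsStronglyConvexGradOn D μ F gradF)
    (hμ : 0 < μ) (hstar : xstar ∈ D) (hg0 : gradF xstar = 0) {Z : Ω → E} (hZD : ∀ ω, Z ω ∈ D)
    (hFZ : Integrable (fun ω => F (Z ω)) P) :
    ∫ ω, ‖Z ω - xstar‖ ^ 2 ∂P ≤ 2 / μ * (∫ ω, F (Z ω) ∂P - F xstar) := by
  rw [← integral_sub_const hFZ, ← integral_const_mul]
  exact integral_mono_of_nonneg (ae_of_all _ fun _ => by positivity)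
    ((hFZ.sub (integrable_const _)).const_mul _)
    (ae_of_all _ fun ω => hsc.sq_norm_sub_le hμ hstar hg0 (hZD ω))

variable [IsProbabilityMeasure P] [CompleteSpace E]

theorem integral_sq_norm_sub_le_of_condExp (hm : m ≤ mΩ) {Y Y' W h g : Ω → E} {r : Ω → ℝ}
    {z : E} (hY : StronglyMeasurable[m] Y) (hY' : ∀ ω, Y' ω = Y ω - lam • (W ω + h ω))
    (hYz : MemLp (fun ω => Y ω - z) 2 P) (hW : MemLp W 2 P) (hh : MemLp h 2 P)
    (hg : MemLp g 2 P) (hr : Integrable r P) (hWg : P[W|m] =ᵐ[P] g)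
    (hWr : P[fun ω => ‖W ω‖ ^ 2|m] ≤ᵐ[P] r) :
    ∫ ω, ‖Y' ω - z‖ ^ 2 ∂P
      ≤ ∫ ω, (‖Y ω - z‖ ^ 2 + (-(2 * lam) * ⟪g ω + h ω, Y ω - z⟫
        + 2 * lam ^ 2 * (r ω + ‖h ω‖ ^ 2))) ∂P := by
  have hYz2 := hYz.norm.integrable_sq
  have hW2 := hW.norm.integrable_sq
  have hh2 := hh.norm.integrable_sq
  have hWY : Integrable (fun ω => ⟪W ω, Y ω - z⟫) P := hW.integrable_inner hYz
  have hhY : Integrable (fun ω => ⟪h ω, Y ω - z⟫) P := hh.integrable_inner hYz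
  have hgY : Integrable (fun ω => ⟪g ω, Y ω - z⟫) P := hg.integrable_inner hYz
  have hinner : ∫ ω, ⟪W ω, Y ω - z⟫ ∂P = ∫ ω, ⟪g ω, Y ω - z⟫ ∂P :=
    integral_inner_eq_of_condExp_ae_eq hm (hW.integrable one_le_two)
      (hY.sub stronglyMeasurable_const) hWY hWg
  calc ∫ ω, ‖Y' ω - z‖ ^ 2 ∂P
      ≤ ∫ ω, (‖Y ω - z‖ ^ 2 + (-(2 * lam) * (⟪W ω, Y ω - z⟫ + ⟪h ω, Y ω - z⟫)
        + 2 * lam ^ 2 * (‖W ω‖ ^ 2 + ‖h ω‖ ^ 2))) ∂P := by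
        refine integral_mono_of_nonneg (ae_of_all _ fun ω => by positivity) (by fun_prop)
          (ae_of_all _ fun ω => ?_)
        dsimp only
        rw [hY' ω, sub_right_comm]
        exact norm_sub_smul_add_sq_le _ _ _ _
    _ = ∫ ω, ‖Y ω - z‖ ^ 2 ∂P + (-(2 * lam) * (∫ ω, ⟪W ω, Y ω - z⟫ ∂P
          + ∫ ω, ⟪h ω, Y ω - z⟫ ∂P)
          + 2 * lam ^ 2 * (∫ ω, ‖W ω‖ ^ 2 ∂P + ∫ ω, ‖h ω‖ ^ 2 ∂P)) := by
      rw [integral_add hYz2 (by fun_prop), integral_add (by fun_prop) (by fun_prop),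
        integral_const_mul, integral_const_mul, integral_add hWY hhY, integral_add hW2 hh2]
    _ ≤ ∫ ω, ‖Y ω - z‖ ^ 2 ∂P + (-(2 * lam) * (∫ ω, ⟪g ω, Y ω - z⟫ ∂P
          + ∫ ω, ⟪h ω, Y ω - z⟫ ∂P)
          + 2 * lam ^ 2 * (∫ ω, r ω ∂P + ∫ ω, ‖h ω‖ ^ 2 ∂P)) := by
      rw [hinner]
      gcongr _ + (_ + 2 * lam ^ 2 * (?_ + _))
      exact integral_le_of_condExp_le hm hr hWr
    _ = _ := by
      simp only [inner_add_left]
      rw [integral_add hYz2 (by fun_prop), integral_add (by fun_prop) (by fun_prop),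
        integral_const_mul, integral_const_mul, integral_add hgY hhY, integral_add hr hh2]

variable [MeasurableSpace E] [BorelSpace E] [SecondCountableTopology E]

theorem IsStronglyConvexGradOn.integral_step_le (hsc : IsStronglyConvexGradOn D μ F gradF)
    (hstar : xstar ∈ D) (hg0 : gradF xstar = 0)
    (hsm : ∀ x ∈ D, ‖gradF x‖ ^ 2 ≤ 2 * L * (F x - F xstar)) (hgm : Measurable gradF)
    (hμ : 0 < μ) (hlam : 0 ≤ lam) (hCD : 0 ≤ CD) (hm : m ≤ mΩ) {Y Y' xr h W : Ω → E}
    (hY : StronglyMeasurable[m] Y) (hxr : StronglyMeasurable xr)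
    (hYD : ∀ ω, Y ω ∈ D) (hxrD : ∀ ω, xr ω ∈ D) (hY' : ∀ ω, Y' ω = Y ω - lam • (W ω + h ω))
    (hW : Integrable W P) (hW2 : Integrable (fun ω => ‖W ω‖ ^ 2) P)
    (hh : Integrable h P) (hh2 : Integrable (fun ω => ‖h ω‖ ^ 2) P)
    (hFY : Integrable (fun ω => F (Y ω)) P) (hFxr : Integrable (fun ω => F (xr ω)) P)
    (hunbias : P[W|m] =ᵐ[P] fun ω => gradF (Y ω) - gradF (xr ω))
    (hcouple : P[fun ω => ‖W ω‖ ^ 2|m] ≤ᵐ[P] fun ω => CD * ‖Y ω - xr ω‖ ^ 2)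
    (hV : ∫ ω, ‖h ω - gradF (xr ω)‖ ^ 2 ∂P ≤ V) :
    ∫ ω, ‖Y' ω - xstar‖ ^ 2 ∂P
      ≤ ∫ ω, ‖Y ω - xstar‖ ^ 2 ∂P
        - lam * (1 - 8 / μ * CD * lam) * (∫ ω, F (Y ω) ∂P - F xstar)
        + lam ^ 2 * (8 / μ * CD + 8 * L) * (∫ ω, F (xr ω) ∂P - F xstar)
        + (2 * lam / μ + 4 * lam ^ 2) * V := by
  have hYm : StronglyMeasurable Y := hY.mono hm
  have hgapY : Integrable (fun ω => F (Y ω) - F xstar) P := hFY.sub (integrable_const _)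
  have hgapr : Integrable (fun ω => F (xr ω) - F xstar) P := hFxr.sub (integrable_const _)
  have hd := hsc.memLp_two_sub hμ hstar hg0 hYm hYD hFY
  have hdr := hsc.memLp_two_sub hμ hstar hg0 hxr hxrD hFxr
  have hgY := memLp_two_comp_gradient hsm hgm hYm hYD hFY
  have hgr := memLp_two_comp_gradient hsm hgm hxr hxrD hFxr
  have hhL : MemLp h 2 P := (memLp_two_iff_integrable_sq_norm hh.1).2 hh2
  have hd2 := hd.norm.integrable_sq
  have hYxr2 : Integrable (fun ω => ‖Y ω - xr ω‖ ^ 2) P := by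
    simpa only [Pi.sub_apply, sub_sub_sub_cancel_right] using (hd.sub hdr).norm.integrable_sq
  have he2 : Integrable (fun ω => ‖h ω - gradF (xr ω)‖ ^ 2) P := (hhL.sub hgr).norm.integrable_sq
  have hghd : Integrable (fun ω => ⟪gradF (Y ω) - gradF (xr ω) + h ω, Y ω - xstar⟫) P :=
    ((hgY.sub hgr).add hhL).integrable_inner hd
  calc ∫ ω, ‖Y' ω - xstar‖ ^ 2 ∂P
      ≤ ∫ ω, (‖Y ω - xstar‖ ^ 2 + (-(2 * lam) * ⟪gradF (Y ω) - gradF (xr ω) + h ω, Y ω - xstar⟫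
          + 2 * lam ^ 2 * (CD * ‖Y ω - xr ω‖ ^ 2 + ‖h ω‖ ^ 2))) ∂P :=
      integral_sq_norm_sub_le_of_condExp hm hY hY' hd
        ((memLp_two_iff_integrable_sq_norm hW.1).2 hW2) hhL (hgY.sub hgr)
        (hYxr2.const_mul CD) hunbias hcouple
    _ ≤ ∫ ω, (‖Y ω - xstar‖ ^ 2 + (-(lam * (1 - 8 / μ * CD * lam)) * (F (Y ω) - F xstar)
          + lam ^ 2 * (8 / μ * CD + 8 * L) * (F (xr ω) - F xstar)
          + (2 * lam / μ + 4 * lam ^ 2) * ‖h ω - gradF (xr ω)‖ ^ 2)) ∂P := by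
      refine integral_mono (by fun_prop) (by fun_prop) fun ω => ?_
      have := hsc.step_bound hstar hg0 hsm hμ hlam hCD (hYD ω) (hxrD ω) (h ω)
      dsimp only
      linarith
    _ ≤ _ := by
      rw [integral_add hd2 (by fun_prop), integral_add (by fun_prop) (by fun_prop),
        integral_add (by fun_prop) (by fun_prop), integral_const_mul, integral_const_mul,
        integral_const_mul, integral_sub_const hFY, integral_sub_const hFxr]
      linarith [mul_le_mul_of_nonneg_left hV (by positivity : 0 ≤ 2 * lam / μ + 4 * lam ^ 2)]

end Integral

theorem sum_le_of_le_sub_add {a f : ℕ → ℝ} {c b : ℝ} (hstep : ∀ t, a (t + 1) ≤ a t - c * f t + b)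
    (M : ℕ) : c * ∑ t ∈ Finset.range M, f t ≤ a 0 - a M + M * b :=
  calc c * ∑ t ∈ Finset.range M, f t = ∑ t ∈ Finset.range M, c * f t := Finset.mul_sum _ _ _
    _ ≤ ∑ t ∈ Finset.range M, (a t - a (t + 1) + b) :=
      Finset.sum_le_sum fun t _ => by linarith [hstep t]
    _ = a 0 - a M + M * b := by
      rw [Finset.sum_add_distrib, Finset.sum_range_sub', Finset.sum_const, Finset.card_range,
        nsmul_eq_mul]

theorem epoch_average_le {a f : ℕ → ℝ} {fstar μ lam CD L G V α : ℝ} {M : ℕ} (hlam : 0 < lam)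
    (hden : 0 < 1 - 8 / μ * CD * lam) (hM : 1 ≤ M)
    (hα : α = 2 / (μ * (1 - 8 / μ * CD * lam) * lam * M)
        + (8 / μ * CD + 8 * L) * lam / (1 - 8 / μ * CD * lam))
    (hstep : ∀ t, a (t + 1) ≤ a t - lam * (1 - 8 / μ * CD * lam) * (f t - fstar)
        + lam ^ 2 * (8 / μ * CD + 8 * L) * G + (2 * lam / μ + 4 * lam ^ 2) * V)
    (ha0 : a 0 ≤ 2 / μ * G) (haM : 0 ≤ a M) :
    1 / M * ∑ t ∈ Finset.range M, f t - fstar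
      ≤ α * G + 4 * (lam + 1 / (2 * μ)) / (1 - 8 / μ * CD * lam) * V := by
  have hMpos : (0 : ℝ) < M := by exact_mod_cast hM
  have hsum := sum_le_of_le_sub_add (a := a) (f := fun t => f t - fstar)
    (c := lam * (1 - 8 / μ * CD * lam))
    (b := lam ^ 2 * (8 / μ * CD + 8 * L) * G + (2 * lam / μ + 4 * lam ^ 2) * V)
    (fun t => by linarith [hstep t]) M
  rw [Finset.sum_sub_distrib, Finset.sum_const, Finset.card_range, nsmul_eq_mul] at hsum
  have havg : 1 / M * ∑ t ∈ Finset.range M, f t - fstar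
      = (∑ t ∈ Finset.range M, f t - M * fstar) / M := by
    field_simp
  rw [havg, div_le_iff₀ hMpos, ← mul_le_mul_iff_of_pos_left (mul_pos hlam hden)]
  calc lam * (1 - 8 / μ * CD * lam) * (∑ t ∈ Finset.range M, f t - M * fstar)
      ≤ 2 / μ * G + M * (lam ^ 2 * (8 / μ * CD + 8 * L) * G
          + (2 * lam / μ + 4 * lam ^ 2) * V) := by
        linarith
    _ = _ := by
      rw [hα]
      generalize 1 - 8 / μ * CD * lam = d at hden ⊢
      field_simp
      ring

theorem le_pow_mul_add_div_of_le_mul_add {u : ℕ → ℝ} {α ε : ℝ} (hα0 : 0 ≤ α) (hα1 : α < 1)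
    (hε : 0 ≤ ε) (hu : ∀ n, u (n + 1) ≤ α * u n + ε) (n : ℕ) :
    u n ≤ α ^ n * u 0 + ε / (1 - α) := by
  have h1α : 0 < 1 - α := sub_pos.2 hα1
  induction n with
  | zero => simp only [pow_zero, one_mul, le_add_iff_nonneg_right]; positivity
  | succ n ih =>
    calc u (n + 1) ≤ α * (α ^ n * u 0 + ε / (1 - α)) + ε :=
          (hu n).trans (by gcongr)
      _ = α ^ (n + 1) * u 0 + ε / (1 - α) := by field_simp; ring

theorem simulated_scsg_convergence_general
    {q : ℕ} {Ω : Type*} [mΩ : MeasurableSpace Ω] (P : Measure Ω) [IsProbabilityMeasure P]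
    (F : EuclideanSpace ℝ (Fin q) → ℝ)
    (gradF : EuclideanSpace ℝ (Fin q) → EuclideanSpace ℝ (Fin q))
    (hgrad : ∀ x, HasGradientAt F (gradF x) x)
    (D : Set (EuclideanSpace ℝ (Fin q)))
    (μ L CD : ℝ) (hμ : 0 < μ) (hL : 0 < L) (hCD : 0 < CD)
    (xstar : EuclideanSpace ℝ (Fin q)) (hstarD : xstar ∈ D) (hmin : ∀ y, F xstar ≤ F y)
    (hsc : ∀ x ∈ D, ∀ y ∈ D, F x + ⟪gradF x, y - x⟫ + μ / 2 * ‖y - x‖ ^ 2 ≤ F y)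
    (hsm : ∀ x ∈ D, ‖gradF x‖ ^ 2 ≤ 2 * L * (F x - F xstar))
    (M : ℕ) (hM : 1 ≤ M) (lam : ℝ) (hlam : 0 < lam)
    (hden : 0 < 1 - 8 / μ * CD * lam)
    (α ε : ℝ) (hε : 0 < ε)
    (hα : α = 2 / (μ * (1 - 8 / μ * CD * lam) * lam * M)
        + (8 / μ * CD + 8 * L) * lam / (1 - 8 / μ * CD * lam))
    (hα1 : α < 1)
    -- the variance of the batch-averaged reference gradient is small enough
    (Vh : ℝ)
    (hVeps : 4 * (lam + 1 / (2 * μ)) / (1 - 8 / μ * CD * lam) * Vh < ε)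
    -- the algorithm
    (x0 : EuclideanSpace ℝ (Fin q))
    (xt : ℕ → Ω → EuclideanSpace ℝ (Fin q))
    (htil : ℕ → Ω → EuclideanSpace ℝ (Fin q))
    (X ν Wd : ℕ → ℕ → Ω → EuclideanSpace ℝ (Fin q))
    (𝓕 : ℕ → ℕ → MeasurableSpace Ω)
    (hle : ∀ s t, 𝓕 s t ≤ mΩ)
    (hXmeas : ∀ s t, StronglyMeasurable[𝓕 s t] (X s t))
    (hrefmeas : ∀ s, StronglyMeasurable[𝓕 s 0] (xt s))
    (hx0 : ∀ ω, xt 0 ω = x0)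
    (hstart : ∀ s ω, X s 0 ω = xt s ω)
    (hupdate : ∀ s t ω, X s (t + 1) ω = X s t ω - lam • ν s (t + 1) ω)
    (hν : ∀ s t ω, ν s (t + 1) ω = Wd s (t + 1) ω + htil s ω)
    (hinD : ∀ s t ω, X s t ω ∈ D) (hrefD : ∀ s ω, xt s ω ∈ D)
    (hWdint : ∀ s t, Integrable (Wd s (t + 1)) P)
    (hWdsq : ∀ s t, Integrable (fun ω => ‖Wd s (t + 1) ω‖ ^ 2) P)
    (hhint : ∀ s, Integrable (htil s) P)
    (hhsq : ∀ s, Integrable (fun ω => ‖htil s ω‖ ^ 2) P)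
    (hFint : ∀ s, Integrable (fun ω => F (xt s ω)) P)
    (hFXint : ∀ s t, Integrable (fun ω => F (X s t ω)) P)
    -- the reference gradient is unbiased given the reference point, with variance ≤ Vh
    (hVh : ∀ s, ∫ ω, ‖htil s ω - gradF (xt s ω)‖ ^ 2 ∂P ≤ Vh)
    -- unbiasedness and coupling bound for the variance-reduced simulated gradients
    (hunbias : ∀ s t, P[Wd s (t + 1) | 𝓕 s t]
        =ᵐ[P] fun ω => gradF (X s t ω) - gradF (xt s ω))
    (hcouple : ∀ s t, (P[fun ω => ‖Wd s (t + 1) ω‖ ^ 2 | 𝓕 s t])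
        ≤ᵐ[P] fun ω => CD * ‖X s t ω - xt s ω‖ ^ 2)
    -- option II: the epoch output is a uniformly chosen inner iterate
    (hout : ∀ s, ∫ ω, F (xt (s + 1) ω) ∂P
        = (1 / M) * ∑ t ∈ Finset.range M, ∫ ω, F (X s t ω) ∂P) :
    ∀ s : ℕ, ∫ ω, (F (xt s ω) - F xstar) ∂P
      ≤ α ^ s * (F x0 - F xstar) + ε / (1 - α) := by
  replace hsc : IsStronglyConvexGradOn D μ F gradF := hsc
  have hg0 : gradF xstar = 0 :=
    IsLocalMin.hasGradientAt_eq_zero (Filter.Eventually.of_forall hmin) (hgrad xstar)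
  have hgm : Measurable gradF := measurable_of_forall_hasGradientAt hgrad
  have hαnn : 0 ≤ α := by rw [hα]; positivity
  have hepoch : ∀ s, ∫ ω, F (xt (s + 1) ω) ∂P - F xstar
      ≤ α * (∫ ω, F (xt s ω) ∂P - F xstar) + ε := by
    intro s
    have hstep := fun t => hsc.integral_step_le hstarD hg0 hsm hgm hμ hlam.le hCD.le (hle s t)
      (hXmeas s t) ((hrefmeas s).mono (hle s 0)) (hinD s t) (hrefD s)
      (fun ω => (hupdate s t ω).trans (by rw [hν])) (hWdint s t) (hWdsq s t) (hhint s)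
      (hhsq s) (hFXint s t) (hFint s) (hunbias s t) (hcouple s t) (hVh s)
    have ha0 : ∫ ω, ‖X s 0 ω - xstar‖ ^ 2 ∂P ≤ 2 / μ * (∫ ω, F (xt s ω) ∂P - F xstar) := by
      simpa only [hstart] using hsc.integral_sq_norm_sub_le hμ hstarD hg0 (hrefD s) (hFint s)
    have havg := epoch_average_le (a := fun t => ∫ ω, ‖X s t ω - xstar‖ ^ 2 ∂P) hlam hden hM hα
      hstep ha0 (integral_nonneg fun _ => by positivity)
    rw [hout]
    linarith
  intro s
  rw [integral_sub_const (hFint s)]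
  simpa [hx0] using le_pow_mul_add_div_of_le_mul_add
    (u := fun s => ∫ ω, F (xt s ω) ∂P - F xstar) hαnn hα1 hε.le hepoch s

/-- (Convergence of Simulated SCSG to an ε-neighborhood.) As in the
Simulated SVRG setting, but the reference gradient is the batch-averaged MLMC estimator
`htil s` (measurable with respect to the epoch-initial σ-algebra, unbiased for `∇F(xt s)`
given the reference point, and with variance `E‖htil s − ∇F(xt s)‖² ≤ Vh`). If
`α = 2/(μ(1 − (8/μ)C_D λ)λM) + ((8/μ)C_D + 8L)λ/(1 − (8/μ)C_D λ) < 1` and `K, B` are large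
enough that `(4(λ + 1/(2μ))/(1 − (8/μ)C_D λ)) Vh < ε`, then
`E[F(xt s) − F(x⋆)] ≤ α^s (F(x0) − F(x⋆)) + ε/(1 − α)`. -/
theorem simulated_scsg_convergence
    {q : ℕ} {Ω : Type*} [mΩ : MeasurableSpace Ω] (P : Measure Ω) [IsProbabilityMeasure P]
    (F : EuclideanSpace ℝ (Fin q) → ℝ)
    (gradF : EuclideanSpace ℝ (Fin q) → EuclideanSpace ℝ (Fin q))
    (hgrad : ∀ x, HasGradientAt F (gradF x) x)
    (D : Set (EuclideanSpace ℝ (Fin q))) (hDcpt : IsCompact D)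
    (μ L CD : ℝ) (hμ : 0 < μ) (hL : 0 < L) (hCD : 0 < CD)
    (xstar : EuclideanSpace ℝ (Fin q)) (hstarD : xstar ∈ D) (hmin : ∀ y, F xstar ≤ F y)
    (hsc : ∀ x ∈ D, ∀ y ∈ D, F x + ⟪gradF x, y - x⟫ + μ / 2 * ‖y - x‖ ^ 2 ≤ F y)
    (hsm : ∀ x ∈ D, ‖gradF x‖ ^ 2 ≤ 2 * L * (F x - F xstar))
    (M : ℕ) (hM : 1 ≤ M) (lam : ℝ) (hlam : 0 < lam)
    (hden : 0 < 1 - 8 / μ * CD * lam)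
    (α ε : ℝ) (hε : 0 < ε)
    (hα : α = 2 / (μ * (1 - 8 / μ * CD * lam) * lam * M)
        + (8 / μ * CD + 8 * L) * lam / (1 - 8 / μ * CD * lam))
    (hα1 : α < 1)
    -- the variance of the batch-averaged reference gradient is small enough
    (Vh : ℝ)
    (hVeps : 4 * (lam + 1 / (2 * μ)) / (1 - 8 / μ * CD * lam) * Vh < ε)
    -- the algorithm
    (x0 : EuclideanSpace ℝ (Fin q)) (hx0D : x0 ∈ D)
    (xt : ℕ → Ω → EuclideanSpace ℝ (Fin q))
    (htil : ℕ → Ω → EuclideanSpace ℝ (Fin q))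
    (X ν Wd : ℕ → ℕ → Ω → EuclideanSpace ℝ (Fin q))
    (𝓕 : ℕ → ℕ → MeasurableSpace Ω)
    (hle : ∀ s t, 𝓕 s t ≤ mΩ) (hmono : ∀ s, Monotone (𝓕 s))
    (hXmeas : ∀ s t, StronglyMeasurable[𝓕 s t] (X s t))
    (hrefmeas : ∀ s, StronglyMeasurable[𝓕 s 0] (xt s))
    (hhmeas : ∀ s, StronglyMeasurable[𝓕 s 0] (htil s))
    (hx0 : ∀ ω, xt 0 ω = x0)
    (hstart : ∀ s ω, X s 0 ω = xt s ω)
    (hupdate : ∀ s t ω, X s (t + 1) ω = X s t ω - lam • ν s (t + 1) ω)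
    (hν : ∀ s t ω, ν s (t + 1) ω = Wd s (t + 1) ω + htil s ω)
    (hinD : ∀ s t ω, X s t ω ∈ D) (hrefD : ∀ s ω, xt s ω ∈ D)
    (hWdint : ∀ s t, Integrable (Wd s (t + 1)) P)
    (hWdsq : ∀ s t, Integrable (fun ω => ‖Wd s (t + 1) ω‖ ^ 2) P)
    (hhint : ∀ s, Integrable (htil s) P)
    (hhsq : ∀ s, Integrable (fun ω => ‖htil s ω‖ ^ 2) P)
    (hFint : ∀ s, Integrable (fun ω => F (xt s ω)) P)
    (hFXint : ∀ s t, Integrable (fun ω => F (X s t ω)) P)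
    -- the reference gradient is unbiased given the reference point, with variance ≤ Vh
    (hunbiasH : ∀ s, P[htil s | MeasurableSpace.comap (xt s) inferInstance]
        =ᵐ[P] fun ω => gradF (xt s ω))
    (hVh : ∀ s, ∫ ω, ‖htil s ω - gradF (xt s ω)‖ ^ 2 ∂P ≤ Vh)
    -- unbiasedness and coupling bound for the variance-reduced simulated gradients
    (hunbias : ∀ s t, P[Wd s (t + 1) | 𝓕 s t]
        =ᵐ[P] fun ω => gradF (X s t ω) - gradF (xt s ω))
    (hcouple : ∀ s t, (P[fun ω => ‖Wd s (t + 1) ω‖ ^ 2 | 𝓕 s t])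
        ≤ᵐ[P] fun ω => CD * ‖X s t ω - xt s ω‖ ^ 2)
    -- option II: the epoch output is a uniformly chosen inner iterate
    (hout : ∀ s, ∫ ω, F (xt (s + 1) ω) ∂P
        = (1 / M) * ∑ t ∈ Finset.range M, ∫ ω, F (X s t ω) ∂P) :
    ∀ s : ℕ, ∫ ω, (F (xt s ω) - F xstar) ∂P
      ≤ α ^ s * (F x0 - F xstar) + ε / (1 - α) :=
  simulated_scsg_convergence_general (mΩ := mΩ) P F gradF hgrad D μ L CD hμ hL hCD xstar hstarD hmin
    hsc hsm M hM lam hlam hden α ε hε hα hα1 Vh hVeps x0 xt htil X ν Wd 𝓕 hle hXmeas hrefmeas hx0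
    hstart hupdate hν hinD hrefD hWdint hWdsq hhint hhsq hFint hFXint hVh hunbias hcouple hout
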